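/- arXiv:2504.13481 — 2 statements merged into one kernel-verified Lean document; each statement's English description precedes it below -/
import Mathlib

section
/- For every real number α with 0 < α ≤ 1, one has c(α) ≤ 9/8, and equality c(α) = 9/8 holds if and only if α = 3/4. Thus the anyonic magnetic Thomas-Fermi constant attains its absolute maximum 9/8 on (0,1] at the statistics parameter α = 3/4. -/
/-- The anyonic magnetic Thomas-Fermi constant. -/
noncomputable def mTFconst (α : ℝ) : ℝ :=
  1 + α ^ 2 * (1 - Int.fract α⁻¹) * Int.fract α⁻¹

/-- For `0 < α ≤ 1`, the anyonic magnetic Thomas-Fermi constant satisfies `c(α) ≤ 9/8`,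
with equality precisely at `α = 3/4`: the absolute maximum `9/8` on `(0,1]` is attained
exactly at the statistics parameter `α = 3/4`. -/
theorem mTFconst_max (α : ℝ) (hα : 0 < α) (hα1 : α ≤ 1) :
    mTFconst α ≤ 9 / 8 ∧ (mTFconst α = 9 / 8 ↔ α = 3 / 4) := by
  have ht : 1 ≤ α⁻¹ := (one_le_inv_iff₀).mpr ⟨hα, hα1⟩
  have hαt : α * α⁻¹ = 1 := mul_inv_cancel₀ hα.ne'
  have hf0 : 0 ≤ Int.fract α⁻¹ := Int.fract_nonneg _
  have hf1 : Int.fract α⁻¹ < 1 := Int.fract_lt_one _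
  have hfloor : (1:ℤ) ≤ ⌊α⁻¹⌋ := Int.le_floor.mpr (by exact_mod_cast ht)
  have hfloorR : (1:ℝ) ≤ (⌊α⁻¹⌋ : ℝ) := by exact_mod_cast hfloor
  have hadd : (⌊α⁻¹⌋ : ℝ) + Int.fract α⁻¹ = α⁻¹ := Int.floor_add_fract _
  have hts : (1:ℝ) + Int.fract α⁻¹ ≤ α⁻¹ := by linarith
  have key : 8 * ((1 - Int.fract α⁻¹) * Int.fract α⁻¹) ≤ (α⁻¹) ^ 2 := by
    nlinarith [sq_nonneg (3 * Int.fract α⁻¹ - 1)]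
  have hα2 : α ^ 2 * (α⁻¹) ^ 2 = 1 := by nlinarith
  have hmain : mTFconst α ≤ 9 / 8 := by
    unfold mTFconst
    nlinarith [sq_nonneg α, mul_pos hα hα]
  refine ⟨hmain, ?_, ?_⟩
  · intro heq
    unfold mTFconst at heq
    have h8 : 8 * ((1 - Int.fract α⁻¹) * Int.fract α⁻¹) = (α⁻¹) ^ 2 := by
      nlinarith
    have hf3 : Int.fract α⁻¹ = 1/3 := by
      nlinarith [sq_nonneg (3 * Int.fract α⁻¹ - 1)]
    have hteq : α⁻¹ = 1 + Int.fract α⁻¹ := by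
      nlinarith [sq_nonneg (3 * Int.fract α⁻¹ - 1)]
    have ht43 : α⁻¹ = 4/3 := by rw [hteq, hf3]; norm_num
    rw [ht43] at hαt
    linarith
  · intro h
    subst h
    have h1 : ((3:ℝ)/4)⁻¹ = 4/3 := by norm_num
    have hfl : ⌊(4/3 : ℝ)⌋ = 1 := by
      apply Int.floor_eq_iff.mpr <;> norm_num
    have hfr : Int.fract ((3:ℝ)/4)⁻¹ = 1/3 := by
      rw [h1, Int.fract, hfl]; norm_num
    unfold mTFconst
    rw [hfr]
    norm_num
end

section
/- Explicit magnetic Thomas-Fermi ground-state energy: let s > 0, c > 0, N > 0, set λ := (4c(s+2)/s)^{s/(s+2)} and ρ⋆(x) := (N/(4πc))(λ − |x|^s)₊ for x ∈ ℝ². Then ∫_{ℝ²} (2πc ρ⋆(x)² + N |x|^s ρ⋆(x)) dx = N² · (s/(8c(s+1))) · λ^{(2s+2)/s} = N² · (s/(8(s+1))) · (4(s+2)/s)^{(2s+2)/(s+2)} · c^{s/(s+2)}. -/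
/-!
Where `|x|^s = t`, the energy density of `ρ⋆` is `2πc ρ⋆² + N t ρ⋆ = N² (λ² - t²)₊ / (8πc)`,
so the energy is a radial integral.
Polar coordinates in the plane give `2π ∫₀^R r (λ² - r^{2s}) dr` with `R = λ^{1/s}`, which equals
`2π λ^{(2s+2)/s} s / (2s + 2)`; the second formula is exponent arithmetic using the value of `λ`.
-/

open Real MeasureTheory Set

theorem integral_fun_norm_euclideanSpace_fin_two {F : Type*} [NormedAddCommGroup F]
    [NormedSpace ℝ F] (f : ℝ → F) :
    ∫ x : EuclideanSpace ℝ (Fin 2), f ‖x‖ = (2 * π) • ∫ r in Ioi (0 : ℝ), r • f r := by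
  rw [integral_fun_norm_addHaar volume f, measureReal_def, EuclideanSpace.volume_ball_fin_two]
  simp [mul_smul, ENNReal.toReal_ofReal pi_nonneg, ← Nat.cast_smul_eq_nsmul ℝ]

/-- The right side is `N² (λ² - t²)₊ / (8πc)`, written as `(λ - t)₊ (λ + t)` so that no sign
condition on `λ` or `t` is needed. -/
theorem mTF_energy_density_eq (c N lam t : ℝ) (hc : c ≠ 0) :
    2 * π * c * (N / (4 * π * c) * max (lam - t) 0) ^ 2
        + N * t * (N / (4 * π * c) * max (lam - t) 0)
      = N ^ 2 / (8 * π * c) * (max (lam - t) 0 * (lam + t)) := by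
  rcases le_total t lam with h | h
  · rw [max_eq_left (sub_nonneg.2 h)]
    field_simp
    ring
  · rw [max_eq_right (sub_nonpos.2 h)]
    ring

theorem integral_Ioi_mul_max_sub_rpow_mul_add_rpow (s lam : ℝ) (hs : 0 < s) (hlam : 0 < lam) :
    ∫ r in Ioi (0 : ℝ), r * (max (lam - r ^ s) 0 * (lam + r ^ s))
      = s / (2 * s + 2) * lam ^ ((2 * s + 2) / s) := by
  set R := lam ^ s⁻¹
  have hR : 0 < R := rpow_pos_of_pos hlam _
  have hRs : R ^ s = lam := rpow_inv_rpow hlam.le hs.ne'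
  have hvanish : ∀ r ∈ Ioi (0 : ℝ) \ Ioc 0 R, r * (max (lam - r ^ s) 0 * (lam + r ^ s)) = 0 := by
    rintro r ⟨hr, hrR⟩
    have hRr : R < r := not_le.1 fun h => hrR ⟨hr, h⟩
    have : lam < r ^ s := hRs ▸ rpow_lt_rpow hR.le hRr hs
    rw [max_eq_right (by linarith), zero_mul, mul_zero]
  have hinside : ∀ r ∈ uIcc 0 R,
      r * (max (lam - r ^ s) 0 * (lam + r ^ s)) = lam ^ 2 * r - r ^ (2 * s + 1) := by
    intro r hr
    rw [uIcc_of_le hR.le] at hr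
    have : r ^ s ≤ lam := hRs ▸ rpow_le_rpow hr.1 hr.2 hs.le
    rw [max_eq_left (by linarith), rpow_add' hr.1 (by positivity), rpow_one, mul_comm 2 s,
      rpow_mul hr.1, rpow_two]
    ring
  have hR_pow : R ^ (2 * s + 2) = lam ^ ((2 * s + 2) / s) := by
    rw [← rpow_mul hlam.le, inv_mul_eq_div]
  have hR_sq : lam ^ 2 * R ^ 2 = lam ^ ((2 * s + 2) / s) := by
    rw [← hR_pow, show 2 * s + 2 = s * 2 + 2 by ring, rpow_add hR, rpow_mul hR.le, hRs, rpow_two,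
      rpow_two]
  calc ∫ r in Ioi (0 : ℝ), r * (max (lam - r ^ s) 0 * (lam + r ^ s))
      = ∫ r in (0 : ℝ)..R, r * (max (lam - r ^ s) 0 * (lam + r ^ s)) := by
        rw [setIntegral_eq_of_subset_of_forall_sdiff_eq_zero measurableSet_Ioi Ioc_subset_Ioi_self
          hvanish, intervalIntegral.integral_of_le hR.le]
    _ = ∫ r in (0 : ℝ)..R, (lam ^ 2 * r - r ^ (2 * s + 1)) :=
        intervalIntegral.integral_congr hinside
    _ = lam ^ 2 * R ^ 2 / 2 - R ^ (2 * s + 2) / (2 * s + 2) := by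
        rw [intervalIntegral.integral_sub (intervalIntegral.intervalIntegrable_id.const_mul _)
            (intervalIntegral.intervalIntegrable_rpow' (by linarith)),
          intervalIntegral.integral_const_mul, integral_id,
          integral_rpow (Or.inl (by linarith)), zero_rpow (by positivity)]
        ring_nf
    _ = s / (2 * s + 2) * lam ^ ((2 * s + 2) / s) := by
        rw [hR_sq, hR_pow]
        field_simp
        ring

theorem rpow_rpow_two_mul_add_two_div (s c : ℝ) (hs : 0 < s) (hc : 0 < c) :
    ((4 * c * (s + 2) / s) ^ (s / (s + 2))) ^ ((2 * s + 2) / s)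
      = (4 * (s + 2) / s) ^ ((2 * s + 2) / (s + 2)) * c * c ^ (s / (s + 2)) := by
  have hexp : s / (s + 2) * ((2 * s + 2) / s) = (2 * s + 2) / (s + 2) := by
    field_simp
  have hexp_c : (2 * s + 2) / (s + 2) = 1 + s / (s + 2) := by
    field_simp
    ring
  rw [← rpow_mul (by positivity), hexp, show 4 * c * (s + 2) / s = 4 * (s + 2) / s * c by ring,
    mul_rpow (by positivity) hc.le, mul_assoc]
  congr 1
  rw [hexp_c, rpow_add hc, rpow_one]

theorem mTF_ground_state_energy_general (s c N : ℝ) (hs : 0 < s) (hc : 0 < c)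
    (lam : ℝ) (hlam : lam = (4 * c * (s + 2) / s) ^ (s / (s + 2)))
    (ρstar : EuclideanSpace ℝ (Fin 2) → ℝ)
    (hρstar : ∀ x, ρstar x = N / (4 * π * c) * max (lam - ‖x‖ ^ s) 0) :
    (∫ x : EuclideanSpace ℝ (Fin 2),
        (2 * π * c * ρstar x ^ 2 + N * ‖x‖ ^ s * ρstar x))
      = N ^ 2 * (s / (8 * c * (s + 1))) * lam ^ ((2 * s + 2) / s) ∧
    N ^ 2 * (s / (8 * c * (s + 1))) * lam ^ ((2 * s + 2) / s)
      = N ^ 2 * (s / (8 * (s + 1))) * (4 * (s + 2) / s) ^ ((2 * s + 2) / (s + 2))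
          * c ^ (s / (s + 2)) := by
  have hlam_pos : 0 < lam := hlam ▸ by positivity
  have hdensity : ∀ x : EuclideanSpace ℝ (Fin 2),
      2 * π * c * ρstar x ^ 2 + N * ‖x‖ ^ s * ρstar x
        = N ^ 2 / (8 * π * c) * (max (lam - ‖x‖ ^ s) 0 * (lam + ‖x‖ ^ s)) := fun x => by
    rw [hρstar, mTF_energy_density_eq c N lam _ hc.ne']
  refine ⟨?_, ?_⟩
  · rw [integral_congr_ae (.of_forall hdensity), integral_const_mul,
      integral_fun_norm_euclideanSpace_fin_two (fun r => max (lam - r ^ s) 0 * (lam + r ^ s))]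
    simp only [smul_eq_mul]
    rw [integral_Ioi_mul_max_sub_rpow_mul_add_rpow s lam hs hlam_pos]
    field_simp
  · rw [hlam, rpow_rpow_two_mul_add_two_div s c hs hc]
    field_simp

/-- Explicit magnetic Thomas-Fermi ground-state energy for the potential `V(x) = |x|^s`:
with `λ = (4c(s+2)/s)^(s/(s+2))` and `ρ⋆(x) = (N/(4πc))(λ - |x|^s)₊`, the energy
`∫ (2πc ρ⋆² + N |x|^s ρ⋆)` equals `N² (s/(8c(s+1))) λ^((2s+2)/s)`, i.e.
`N² (s/(8(s+1))) (4(s+2)/s)^((2s+2)/(s+2)) c^(s/(s+2))`. -/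
theorem mTF_ground_state_energy (s c N : ℝ) (hs : 0 < s) (hc : 0 < c) (hN : 0 < N)
    (lam : ℝ) (hlam : lam = (4 * c * (s + 2) / s) ^ (s / (s + 2)))
    (ρstar : EuclideanSpace ℝ (Fin 2) → ℝ)
    (hρstar : ∀ x, ρstar x = N / (4 * π * c) * max (lam - ‖x‖ ^ s) 0) :
    (∫ x : EuclideanSpace ℝ (Fin 2),
        (2 * π * c * ρstar x ^ 2 + N * ‖x‖ ^ s * ρstar x))
      = N ^ 2 * (s / (8 * c * (s + 1))) * lam ^ ((2 * s + 2) / s) ∧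
    N ^ 2 * (s / (8 * c * (s + 1))) * lam ^ ((2 * s + 2) / s)
      = N ^ 2 * (s / (8 * (s + 1))) * (4 * (s + 2) / s) ^ ((2 * s + 2) / (s + 2))
          * c ^ (s / (s + 2)) :=
  mTF_ground_state_energy_general s c N hs hc lam hlam ρstar hρstar
end
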